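/- arXiv:1110.2716 — 2 statements merged into one kernel-verified Lean document; each statement's English description precedes it below -/
import Mathlib

section
/- The ideal Ĵ^{⟨t⟩}, generated by the permanents g_{i,a,b} with d(a,b) = d_t(a,b) = 3 and i ∈ D_t(a,b), equals the ideal generated by the square-free monomials x_a x_b with d(a,b) = d_t(a,b) = 3; in particular Ĵ^{⟨t⟩} is a radical ideal. -/
open MvPolynomial Finset

/-- The index set `N = [r 1] × ⋯ × [r n]`, realized as dependent functions. -/
abbrev Idx {n : ℕ} (r : Fin n → ℕ) := ∀ i, Fin (r i)

variable {n : ℕ} {r : Fin n → ℕ}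

/-- The switch `s(K,a,b)`: `b i` in the components of `K`, `a i` elsewhere. -/
def sw (K : Finset (Fin n)) (a b : Idx r) : Idx r := fun i => if i ∈ K then b i else a i

/-- The distance `d(a,b) = #{i : a i ≠ b i}`. -/
def hdist (a b : Idx r) : ℕ := (univ.filter fun i => a i ≠ b i).card

/-- The truncated distance `d_t(a,b) = #{i ∈ [t] : a i ≠ b i}`. -/
def hdistT (t : ℕ) (a b : Idx r) : ℕ :=
  (univ.filter fun i : Fin n => (i : ℕ) < t ∧ a i ≠ b i).card

/-- `c : ℕ → N` is a path of length `m` from `a` to `b` inside `S`: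
consecutive elements differ in exactly one component. -/
def IsPath (S : Set (Idx r)) (a b : Idx r) (m : ℕ) (c : ℕ → Idx r) : Prop :=
  c 0 = a ∧ c m = b ∧ (∀ j ≤ m, c j ∈ S) ∧ ∀ j < m, hdist (c j) (c (j + 1)) = 1

/-- `a` and `b` are connected in `S`. -/
def Connected (S : Set (Idx r)) (a b : Idx r) : Prop := ∃ m c, IsPath S a b m c

/-- The minimal path length `pl_S(a,b)`. -/
noncomputable def pl (S : Set (Idx r)) (a b : Idx r) : ℕ :=
  sInf {m | ∃ c, IsPath S a b m c}

/-- `S` is `t`-switchable. -/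
def Switchable (t : ℕ) (S : Set (Idx r)) : Prop :=
  ∀ a ∈ S, ∀ b ∈ S, hdist a b = 2 → ∀ i : Fin n, (i : ℕ) < t →
    sw {i} a b ∈ S ∧ sw {i} b a ∈ S

/-- `S` is `t`-signed: `t`-switchable, and each connectedness class satisfies one of:
constant first `t` coordinates, pairwise distance at most 1, or path-independent
parity of path lengths. -/
def Signed (t : ℕ) (S : Set (Idx r)) : Prop :=
  Switchable t S ∧
  ∀ a ∈ S,
    (∀ b c, Connected S a b → Connected S a c → ∀ i : Fin n, (i : ℕ) < t → b i = c i) ∨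
    (∀ b c, Connected S a b → Connected S a c → hdist b c ≤ 1) ∨
    (∀ b c, Connected S a b → Connected S a c →
      ∀ m m' p p', IsPath S b c m p → IsPath S b c m' p' → m % 2 = m' % 2)

variable (k : Type*) [Field k]

/-- The generalized determinant `f_{i,a,b}`. -/
noncomputable def fdet (i : Fin n) (a b : Idx r) : MvPolynomial (Idx r) k :=
  X a * X b - X (sw {i} a b) * X (sw {i} b a)

/-- The generalized permanent `g_{i,a,b}`. -/
noncomputable def gperm (i : Fin n) (a b : Idx r) : MvPolynomial (Idx r) k :=
  X a * X b + X (sw {i} a b) * X (sw {i} b a)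

/-- The binomial `h_{S,K,a,b}`. -/
noncomputable def hbin (S : Set (Idx r)) (K : Finset (Fin n)) (a b : Idx r) :
    MvPolynomial (Idx r) k :=
  X a * X b - (-1) ^ (K.card * (pl S a b - 1)) * (X (sw K a b) * X (sw K b a))

/-- The slice permanental ideal `J^⟨t⟩`. -/
noncomputable def Jt (t : ℕ) : Ideal (MvPolynomial (Idx r) k) :=
  Ideal.span {p | ∃ (a b : Idx r) (i : Fin n),
    hdist a b = 2 ∧ (i : ℕ) < t ∧ a i ≠ b i ∧ p = gperm k i a b}

/-- The ideal `J̃^⟨t⟩_S`. -/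
noncomputable def Jtilde (t : ℕ) (S : Set (Idx r)) : Ideal (MvPolynomial (Idx r) k) :=
  Ideal.span {p | ∃ (a b : Idx r) (i : Fin n),
    Connected S a b ∧ (i : ℕ) < t ∧ a i ≠ b i ∧ p = hbin k S {i} a b}

/-- The ideal `Var^⟨t⟩_S = (x_a : a ∉ S)`. -/
noncomputable def VarIdeal (S : Set (Idx r)) : Ideal (MvPolynomial (Idx r) k) :=
  Ideal.span {p | ∃ a ∉ S, p = X a}

/-- The ideal `Q^⟨t⟩_S = Var^⟨t⟩_S + J̃^⟨t⟩_S`. -/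
noncomputable def Qideal (t : ℕ) (S : Set (Idx r)) : Ideal (MvPolynomial (Idx r) k) :=
  VarIdeal k S + Jtilde k t S

/-- The ideal `Ĵ^⟨t⟩`. -/
noncomputable def Jhat (t : ℕ) : Ideal (MvPolynomial (Idx r) k) :=
  Ideal.span {p | ∃ (a b : Idx r) (i : Fin n),
    hdist a b = 3 ∧ hdistT t a b = 3 ∧ (i : ℕ) < t ∧ a i ≠ b i ∧ p = gperm k i a b}

/-- `S` is a maximal `t`-signed set. -/
noncomputable def MaximalSigned (t : ℕ) (S : Set (Idx r)) : Prop :=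
  Signed t S ∧ ∀ T : Set (Idx r), Signed t T → S ⊆ T → Qideal k t S ≤ Qideal k t T

/-!
`2 x_a x_b` is a signed sum of three permanents: if `a` and `b` differ exactly in the
coordinates `i, j, l`, then `g_{i,a,b} + g_{j,a,b} - g_{l,s(i,a,b),s(i,b,a)} = 2 x_a x_b`, because
switching `a` and `b` first at `i` and then at `l` is the same as switching them at `j`.
Hence `Ĵ^⟨t⟩` is the edge ideal of the graph `d = d_t = 3`, and an ideal generated by squarefree
monomials is radical: a monomial `μ` divisible by no generator gives the prime
`(x_a : μ_a = 0)`, which contains all generators but no polynomial with `μ` in its support.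
-/

namespace MvPolynomial

variable {σ R : Type*} [CommRing R]

theorem isPrime_span_X_image [IsDomain R] (C : Set σ) :
    (Ideal.span (X '' C : Set (MvPolynomial σ R))).IsPrime := by
  classical
  set I := Ideal.span (X '' C : Set (MvPolynomial σ R))
  let φ : MvPolynomial σ R →ₐ[R] MvPolynomial σ R := aeval fun a => if a ∈ C then 0 else X a
  have hφ : (Ideal.Quotient.mkₐ R I).comp φ = Ideal.Quotient.mkₐ R I := by
    refine algHom_ext fun a => ?_
    by_cases ha : a ∈ C
    · simp only [φ, AlgHom.comp_apply, aeval_X, ha, if_true, map_zero,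
        Ideal.Quotient.mkₐ_eq_mk]
      exact (Ideal.Quotient.eq_zero_iff_mem.mpr
        (Ideal.subset_span (Set.mem_image_of_mem X ha))).symm
    · simp [φ, ha]
  suffices I = RingHom.ker φ from this ▸ RingHom.ker_isPrime _
  refine le_antisymm (Ideal.span_le.mpr ?_) fun p hp => ?_
  · rintro _ ⟨a, ha, rfl⟩
    simp [φ, ha]
  · rw [← Ideal.Quotient.eq_zero_iff_mem, ← Ideal.Quotient.mkₐ_eq_mk R, ← hφ]
    simp [(RingHom.mem_ker).mp hp]

theorem isRadical_span_monomial_of_squarefree [IsDomain R] {S : Set (σ →₀ ℕ)}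
    (hS : ∀ s ∈ S, ∀ a, s a ≤ 1) :
    (Ideal.span ((fun s => monomial s (1 : R)) '' S)).IsRadical := by
  rintro x ⟨m, hm⟩
  rw [mem_ideal_span_monomial_image]
  intro μ hμ
  by_contra! hndvd
  have hle : Ideal.span ((fun s => monomial s (1 : R)) '' S) ≤
      Ideal.span (X '' {a | μ a = 0}) := by
    refine Ideal.span_le.mpr ?_
    rintro _ ⟨s, hs, rfl⟩
    obtain ⟨a, ha⟩ : ∃ a, μ a < s a := by simpa [Finsupp.le_def] using hndvd s hs
    refine mem_ideal_span_X_image.mpr fun m hm => ⟨a, ?_, ?_⟩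
    · have := hS s hs a
      show μ a = 0
      omega
    · rw [Finset.mem_singleton.mp (support_monomial_subset hm)]
      omega
  obtain ⟨a, ha, hμa⟩ :=
    mem_ideal_span_X_image.mp ((isPrime_span_X_image _).mem_of_pow_mem m (hle hm)) μ hμ
  exact hμa ha

theorem isRadical_span_X_mul_X [IsDomain R] {S : Set (MvPolynomial σ R)}
    (hS : ∀ p ∈ S, ∃ a b, a ≠ b ∧ p = X a * X b) : (Ideal.span S).IsRadical := by
  suffices S = (fun s => monomial s (1 : R)) '' {s | monomial s 1 ∈ S ∧ ∀ a, s a ≤ 1} by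
    rw [this]
    exact isRadical_span_monomial_of_squarefree fun s hs => hs.2
  refine Set.Subset.antisymm (fun p hp => ?_) (Set.image_subset_iff.mpr fun s hs => hs.1)
  obtain ⟨a, b, hab, rfl⟩ := hS p hp
  have hmon : X a * X b = monomial (Finsupp.single a 1 + Finsupp.single b 1) (1 : R) := by
    rw [monomial_single_add, pow_one]
    rfl
  refine ⟨Finsupp.single a 1 + Finsupp.single b 1, ⟨hmon ▸ hp, fun x => ?_⟩, hmon.symm⟩
  by_cases ha : a = x <;> by_cases hb : b = x <;> simp_all

end MvPolynomial

theorem hdist_self (a : Idx r) : hdist a a = 0 := by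
  simp [hdist]

theorem sw_ne_sw_iff (K : Finset (Fin n)) (a b : Idx r) (x : Fin n) :
    sw K a b x ≠ sw K b a x ↔ a x ≠ b x := by
  unfold sw
  split_ifs <;> simp [ne_comm]

theorem hdist_sw (K : Finset (Fin n)) (a b : Idx r) :
    hdist (sw K a b) (sw K b a) = hdist a b := by
  simp only [hdist, sw_ne_sw_iff]

theorem hdistT_sw (t : ℕ) (K : Finset (Fin n)) (a b : Idx r) :
    hdistT t (sw K a b) (sw K b a) = hdistT t a b := by
  simp only [hdistT, sw_ne_sw_iff]

theorem lt_of_hdist_eq_hdistT {t : ℕ} {a b : Idx r} (h : hdist a b = hdistT t a b) {x : Fin n}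
    (hx : a x ≠ b x) : (x : ℕ) < t := by
  have hsub : (univ.filter fun x : Fin n => (x : ℕ) < t ∧ a x ≠ b x) ⊆
      univ.filter fun x => a x ≠ b x := by
    intro y hy
    simp_all
  have heq := Finset.eq_of_subset_of_card_le hsub (le_of_eq h)
  have hmem : x ∈ univ.filter fun x => a x ≠ b x := by simpa using hx
  rw [← heq] at hmem
  exact (Finset.mem_filter.mp hmem).2.1

theorem sw_sw_eq_sw {a b : Idx r} {i j l : Fin n} (hij : i ≠ j) (hil : i ≠ l) (hjl : j ≠ l)
    (hD : ∀ x, a x ≠ b x → x = i ∨ x = j ∨ x = l) :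
    sw {l} (sw {i} a b) (sw {i} b a) = sw {j} b a := by
  funext x
  by_cases hx : x = i ∨ x = j ∨ x = l
  · rcases hx with rfl | rfl | rfl <;> simp [sw, *, Ne.symm hij, Ne.symm hil, Ne.symm hjl]
  · have hab : a x = b x := not_not.mp fun h => hx (hD x h)
    simp only [not_or] at hx
    simp [sw, hx.1, hx.2.1, hx.2.2, hab]

section Permanents

theorem gperm_add_gperm_sub_gperm {a b : Idx r} {i j l : Fin n}
    (hij : i ≠ j) (hil : i ≠ l) (hjl : j ≠ l) (hD : ∀ x, a x ≠ b x → x = i ∨ x = j ∨ x = l) :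
    gperm k i a b + gperm k j a b - gperm k l (sw {i} a b) (sw {i} b a) = 2 * (X a * X b) := by
  have e1 := sw_sw_eq_sw hij hil hjl hD
  have e2 := sw_sw_eq_sw hij hil hjl fun x hx => hD x (Ne.symm hx)
  simp only [gperm, e1, e2]
  ring

variable {k}

theorem gperm_mem_Jhat {t : ℕ} {a b : Idx r} {i : Fin n} (h3 : hdist a b = 3)
    (h3t : hdistT t a b = 3) (hi : a i ≠ b i) : gperm k i a b ∈ Jhat k t :=
  Ideal.subset_span ⟨a, b, i, h3, h3t, lt_of_hdist_eq_hdistT (h3.trans h3t.symm) hi, hi, rfl⟩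

theorem X_mul_X_mem_Jhat (h2 : (2 : k) ≠ 0) {t : ℕ} {a b : Idx r} (h3 : hdist a b = 3)
    (h3t : hdistT t a b = 3) : X a * X b ∈ Jhat k t := by
  obtain ⟨i, j, l, hij, hil, hjl, hD⟩ := Finset.card_eq_three.mp h3
  have hdiff : ∀ x, a x ≠ b x ↔ x = i ∨ x = j ∨ x = l := fun x => by
    simpa using congrArg (x ∈ ·) hD
  have h2X : 2 * (X a * X b) ∈ Jhat k t := by
    rw [← gperm_add_gperm_sub_gperm k hij hil hjl fun x => (hdiff x).mp]
    refine sub_mem (add_mem (gperm_mem_Jhat h3 h3t ((hdiff i).mpr (by simp)))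
      (gperm_mem_Jhat h3 h3t ((hdiff j).mpr (by simp)))) (gperm_mem_Jhat ?_ ?_ ?_)
    · rwa [hdist_sw]
    · rwa [hdistT_sw]
    · exact (sw_ne_sw_iff _ _ _ _).mpr ((hdiff l).mpr (by simp))
  have hunit : IsUnit (2 : MvPolynomial (Idx r) k) := by
    simpa [← map_ofNat C 2] using h2.isUnit.map (C : k →+* MvPolynomial (Idx r) k)
  exact (Ideal.unit_mul_mem_iff_mem _ hunit).mp h2X

theorem Jhat_le_span_X_mul_X (t : ℕ) :
    Jhat k t ≤ Ideal.span {p : MvPolynomial (Idx r) k |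
      ∃ a b : Idx r, hdist a b = 3 ∧ hdistT t a b = 3 ∧ p = X a * X b} := by
  refine Ideal.span_le.mpr ?_
  rintro _ ⟨a, b, i, h3, h3t, -, -, rfl⟩
  exact add_mem (Ideal.subset_span ⟨a, b, h3, h3t, rfl⟩)
    (Ideal.subset_span ⟨_, _, (hdist_sw _ a b).trans h3, (hdistT_sw t _ a b).trans h3t, rfl⟩)

end Permanents

/-- `Ĵ^⟨t⟩` equals the indicated square-free monomial ideal and is radical. -/
theorem stmt16 (h2 : (2 : k) ≠ 0) (t : ℕ) :
    Jhat k t = Ideal.span {p : MvPolynomial (Idx r) k |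
        ∃ a b : Idx r, hdist a b = 3 ∧ hdistT t a b = 3 ∧ p = X a * X b} ∧
    (Jhat k t : Ideal (MvPolynomial (Idx r) k)).IsRadical := by
  have hJ : Jhat k t = Ideal.span {p : MvPolynomial (Idx r) k |
      ∃ a b : Idx r, hdist a b = 3 ∧ hdistT t a b = 3 ∧ p = X a * X b} := by
    refine le_antisymm (Jhat_le_span_X_mul_X t) (Ideal.span_le.mpr ?_)
    rintro _ ⟨a, b, h3, h3t, rfl⟩
    exact X_mul_X_mem_Jhat h2 h3 h3t
  refine ⟨hJ, hJ ▸ MvPolynomial.isRadical_span_X_mul_X ?_⟩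
  rintro _ ⟨a, b, h3, -, rfl⟩
  refine ⟨a, b, ?_, rfl⟩
  rintro rfl
  simp [hdist_self] at h3
end

section
/- Let M̌ be the collection of t-signed sets A such that whenever d(a,b) = d_t(a,b) = 3, not both a, b lie in A. Let S be a connected component of a t-signed set in M̌, and suppose that for all a, b ∈ S, d_t(a,b) ≤ 2. Then S is contained in a subset of N in which all coordinates in [t] except at most two are fixed. -/
open MvPolynomial Finset

variable {n : ℕ} {r : Fin n → ℕ}

variable (k : Type*) [Field k]

section AuxStmt19

variable {n : ℕ} {r : Fin n → ℕ}

lemma hdist_comm' (a b : Idx r) : hdist a b = hdist b a := by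
  unfold hdist; congr 1; ext i; simp [ne_comm]

lemma hdist_one_eq' {a b : Idx r} {i : Fin n} (h : hdist a b = 1) (hi : a i ≠ b i) :
    ∀ l, l ≠ i → a l = b l := by
  intro l hl
  by_contra hne
  have hsub : ({i, l} : Finset (Fin n)) ⊆ univ.filter fun m => a m ≠ b m := by
    intro m hm
    simp only [Finset.mem_insert, Finset.mem_singleton] at hm
    rcases hm with rfl | rfl <;> simp [hi, hne]
  have h2 := Finset.card_le_card hsub
  rw [Finset.card_insert_of_notMem (by simp [Ne.symm hl]), Finset.card_singleton] at h2
  unfold hdist at h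
  omega

lemma connected_refl' {T : Set (Idx r)} {a : Idx r} (ha : a ∈ T) : Connected T a a :=
  ⟨0, fun _ => a, rfl, rfl, fun _ _ => ha, fun j hj => absurd hj (Nat.not_lt_zero j)⟩

lemma connected_step' {T : Set (Idx r)} {a y w : Idx r} (h : Connected T a y)
    (hw : w ∈ T) (hd : hdist y w = 1) : Connected T a w := by
  obtain ⟨m, c, hc0, hcm, hmem, hstep⟩ := h
  refine ⟨m + 1, fun j => if j ≤ m then c j else w, by simp [hc0], by simp, ?_, ?_⟩
  · intro j hj
    by_cases hjm : j ≤ m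
    · simpa [hjm] using hmem j hjm
    · simp [hjm, hw]
  · intro j hj
    rcases Nat.lt_or_ge j m with hjm | hjm
    · simpa [Nat.le_of_lt hjm, Nat.succ_le_of_lt hjm] using hstep j hjm
    · have hje : j = m := by omega
      subst hje
      simpa [hcm] using hd

end AuxStmt19

/-- a connectedness class of a `t`-signed set with no pair at distance
`d = d_t = 3`, whose pairs have `d_t ≤ 2`, has all coordinates in `[t]` except at most
two fixed. -/
theorem stmt19 (t : ℕ) (ht : t ≤ n) (T : Set (Idx r)) (hT : Signed t T)
    (hT3 : ∀ a ∈ T, ∀ b ∈ T, ¬(hdist a b = 3 ∧ hdistT t a b = 3))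
    (a₀ : Idx r) (ha₀ : a₀ ∈ T)
    (hd2 : ∀ b c, Connected T a₀ b → Connected T a₀ c → hdistT t b c ≤ 2) :
    ∃ E : Finset (Fin n), E.card ≤ 2 ∧
      ∀ b c, Connected T a₀ b → Connected T a₀ c →
        ∀ m : Fin n, (m : ℕ) < t → m ∉ E → b m = c m := by
  classical
  set S : Set (Idx r) := {b | Connected T a₀ b} with hSdef
  have ha₀S : a₀ ∈ S := connected_refl' ha₀
  have hSsub : S ⊆ T := by
    rintro b ⟨m, c, _, hcm, hmem, _⟩
    exact hcm ▸ hmem m le_rfl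
  have hSw := hT.1
  -- the value of a singleton switch
  have hswv : ∀ (y z' : Idx r) (i l : Fin n), sw {i} y z' l = if l = i then z' l else y l := by
    intro y z' i l; simp [sw]
  -- the key property `P i z`: z has a neighbor in S flipping exactly coordinate i
  let P : Fin n → Idx r → Prop := fun i z => ∃ z', z' ∈ S ∧ hdist z z' = 1 ∧ z i ≠ z' i
  -- switches at distance 2 stay in S
  have swS : ∀ y ∈ S, ∀ z' ∈ S, hdist y z' = 2 → ∀ i : Fin n, (i : ℕ) < t → y i ≠ z' i →
      sw {i} y z' ∈ S ∧ hdist y (sw {i} y z') = 1 ∧ y i ≠ sw {i} y z' i := by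
    intro y hy z' hz' h2 i hi hne
    have hwT : sw {i} y z' ∈ T := (hSw y (hSsub hy) z' (hSsub hz') h2 i hi).1
    have hfil : (univ.filter fun l => y l ≠ sw {i} y z' l) = {i} := by
      ext l
      rcases eq_or_ne l i with rfl | hl
      · simp [hswv, hne]
      · simp [hswv, hl]
    have hd1 : hdist y (sw {i} y z') = 1 := by unfold hdist; rw [hfil]; simp
    exact ⟨connected_step' hy hwT hd1, hd1, by simpa [hswv] using hne⟩
  -- P propagates along edges of S
  have step : ∀ i : Fin n, (i : ℕ) < t → ∀ z ∈ S, ∀ y ∈ S, hdist z y = 1 → P i z → P i y := by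
    rintro i hi z hz y hy hzy ⟨z', hz'S, hzz', hziz'⟩
    have hz'co : ∀ m, m ≠ i → z m = z' m := hdist_one_eq' hzz' hziz'
    rcases eq_or_ne (y i) (z i) with hyi | hyi
    · -- the edge z–y flips some l ≠ i
      obtain ⟨l, hfl⟩ := Finset.card_eq_one.mp hzy
      have hlne : z l ≠ y l := by
        have : l ∈ univ.filter fun m => z m ≠ y m := hfl ▸ Finset.mem_singleton_self l
        exact (Finset.mem_filter.mp this).2
      have hco : ∀ m, m ≠ l → z m = y m := by
        intro m hm
        by_contra hne
        have : m ∈ ({l} : Finset (Fin n)) := hfl ▸ Finset.mem_filter.mpr ⟨Finset.mem_univ m, hne⟩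
        exact hm (Finset.mem_singleton.mp this)
      have hli : l ≠ i := fun h => hlne (by rw [h]; exact hyi.symm)
      have hd2 : hdist y z' = 2 := by
        have hfil : (univ.filter fun m => y m ≠ z' m) = {i, l} := by
          ext m
          simp only [Finset.mem_filter, Finset.mem_univ, true_and, Finset.mem_insert,
            Finset.mem_singleton]
          constructor
          · intro hne
            by_contra hmem
            push_neg at hmem
            exact hne (((hco m (hmem.2)).symm.trans (hz'co m hmem.1)))
          · intro hm
            rcases hm with hm | hm
            · rw [hm]; exact fun h => hziz' (hyi ▸ h)
            · rw [hm]; intro h; exact hlne (h.trans (hz'co l hli).symm).symm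
        unfold hdist
        rw [hfil, Finset.card_insert_of_notMem (by simp [Ne.symm hli]), Finset.card_singleton]
      have hyine : y i ≠ z' i := fun h => hziz' (hyi ▸ h)
      obtain ⟨hw1, hw2, hw3⟩ := swS y hy z' hz'S hd2 i hi hyine
      exact ⟨sw {i} y z', hw1, hw2, hw3⟩
    · -- the edge z–y flips i itself
      have hco : ∀ m, m ≠ i → z m = y m := hdist_one_eq' hzy (fun h => hyi (h.symm))
      rcases eq_or_ne (y i) (z' i) with hyz' | hyz'
      · -- then y = z'; use z as witness
        refine ⟨z, hz, by rw [hdist_comm']; exact hzy, fun h => hyi h⟩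
      · refine ⟨z', hz'S, ?_, hyz'⟩
        have hfil : (univ.filter fun m => y m ≠ z' m) = {i} := by
          ext m
          rcases eq_or_ne m i with rfl | hm
          · simp [hyz']
          · simp [hm, (hco m hm).symm.trans (hz'co m hm)]
        unfold hdist; rw [hfil]; simp
  -- elements of a path starting in S stay in S
  have path_mem : ∀ (m : ℕ) (c : ℕ → Idx r) (x y : Idx r), x ∈ S → IsPath T x y m c →
      ∀ j ≤ m, c j ∈ S := by
    rintro m c x y hx ⟨hc0, hcm, hmem, hstep⟩ j hj
    induction j with
    | zero => exact hc0 ▸ hx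
    | succ j ih =>
      exact connected_step' (ih (by omega)) (hmem (j + 1) hj) (hstep j (by omega))
  -- forward propagation of P along a path in S
  have fwd : ∀ i : Fin n, (i : ℕ) < t → ∀ (m : ℕ) (c : ℕ → Idx r), (∀ j ≤ m, c j ∈ S) →
      (∀ j < m, hdist (c j) (c (j + 1)) = 1) → ∀ j ≤ m, P i (c 0) → P i (c j) := by
    intro i hi m c hmem hstep j hj h0
    induction j with
    | zero => exact h0
    | succ j ih =>
      exact step i hi (c j) (hmem j (by omega)) (c (j + 1)) (hmem _ hj)
        (hstep j (by omega)) (ih (by omega))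
  -- backward propagation
  have bwd : ∀ i : Fin n, (i : ℕ) < t → ∀ (m : ℕ) (c : ℕ → Idx r), (∀ j ≤ m, c j ∈ S) →
      (∀ j < m, hdist (c j) (c (j + 1)) = 1) → ∀ j ≤ m, P i (c j) → P i (c 0) := by
    intro i hi m c hmem hstep j hj
    induction j with
    | zero => exact id
    | succ j ih =>
      intro h
      exact ih (by omega) (step i hi (c (j + 1)) (hmem _ hj) (c j) (hmem j (by omega))
        (by rw [hdist_comm']; exact hstep j (by omega)) h)
  -- a coordinate changes along a path iff it changes at some edge
  have exflip : ∀ (m : ℕ) (c : ℕ → Idx r) (i : Fin n), c 0 i ≠ c m i →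
      ∃ j < m, c j i ≠ c (j + 1) i := by
    intro m c i
    induction m with
    | zero => exact fun h => absurd rfl h
    | succ m ih =>
      intro h
      rcases eq_or_ne (c 0 i) (c m i) with he | hne
      · exact ⟨m, Nat.lt_succ_self m, fun hc => h (he.trans hc)⟩
      · obtain ⟨j, hj, hne'⟩ := ih hne
        exact ⟨j, by omega, hne'⟩
  -- if coordinate i is not fixed on S, every point of S satisfies P i
  have flipall : ∀ i : Fin n, (i : ℕ) < t → (∃ b ∈ S, b i ≠ a₀ i) → ∀ y ∈ S, P i y := by
    rintro i hi ⟨b, hbS, hbi⟩ y hy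
    obtain ⟨m, c, hc0, hcm, hmem, hstep⟩ := hbS
    have hpath : IsPath T a₀ b m c := ⟨hc0, hcm, hmem, hstep⟩
    have hmemS : ∀ j ≤ m, c j ∈ S := path_mem m c a₀ b ha₀S hpath
    obtain ⟨j, hj, hflip⟩ := exflip m c i (by rw [hc0, hcm]; exact fun h => hbi h.symm)
    have hPj : P i (c j) := ⟨c (j + 1), hmemS _ hj, hstep j hj, hflip⟩
    have hP0 : P i a₀ := by
      have := bwd i hi m c hmemS hstep j (le_of_lt hj) hPj
      rwa [hc0] at this
    obtain ⟨m', c', hc0', hcm', hmem', hstep'⟩ := hy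
    have hpath' : IsPath T a₀ y m' c' := ⟨hc0', hcm', hmem', hstep'⟩
    have hmemS' : ∀ j ≤ m', c' j ∈ S := path_mem m' c' a₀ y ha₀S hpath'
    have := fwd i hi m' c' hmemS' hstep' m' le_rfl (by rwa [hc0'])
    rwa [hcm'] at this
  -- the set of non-fixed coordinates below t
  set E : Finset (Fin n) := univ.filter fun i : Fin n => (i : ℕ) < t ∧ ∃ b ∈ S, b i ≠ a₀ i
    with hEdef
  have hEcard : E.card ≤ 2 := by
    by_contra hE
    push_neg at hE
    obtain ⟨G, hGE, hG3⟩ := Finset.exists_subset_card_eq (s := E) (n := 3) (by omega)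
    obtain ⟨i, j, k, hij, hik, hjk, hGeq⟩ := Finset.card_eq_three.mp hG3
    have hiG : i ∈ G := by rw [hGeq]; simp
    have hjG : j ∈ G := by rw [hGeq]; simp
    have hkG : k ∈ G := by rw [hGeq]; simp
    have hiE := Finset.mem_filter.mp (hGE hiG)
    have hjE := Finset.mem_filter.mp (hGE hjG)
    have hkE := Finset.mem_filter.mp (hGE hkG)
    obtain ⟨hit, hiex⟩ := hiE.2
    obtain ⟨hjt, hjex⟩ := hjE.2
    obtain ⟨hkt, hkex⟩ := hkE.2
    obtain ⟨zi, hziS, hdzi, hnei⟩ := flipall i hit hiex a₀ ha₀S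
    obtain ⟨zj, hzjS, hdzj, hnej⟩ := flipall j hjt hjex a₀ ha₀S
    obtain ⟨zk, hzkS, hdzk, hnek⟩ := flipall k hkt hkex a₀ ha₀S
    have hzi : ∀ l, l ≠ i → a₀ l = zi l := hdist_one_eq' hdzi hnei
    have hzj : ∀ l, l ≠ j → a₀ l = zj l := hdist_one_eq' hdzj hnej
    have hzk : ∀ l, l ≠ k → a₀ l = zk l := hdist_one_eq' hdzk hnek
    -- hdist zj zi = 2
    have hd2 : hdist zj zi = 2 := by
      have hfil : (univ.filter fun m => zj m ≠ zi m) = {i, j} := by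
        ext m
        simp only [Finset.mem_filter, Finset.mem_univ, true_and, Finset.mem_insert,
          Finset.mem_singleton]
        constructor
        · intro hne
          by_contra hmem
          push_neg at hmem
          exact hne ((hzj m hmem.2).symm.trans (hzi m hmem.1))
        · intro hm
          rcases hm with hm | hm
          · rw [hm, ← hzj i hij]; exact fun h => hnei h
          · rw [hm, ← hzi j (Ne.symm hij)]; exact fun h => hnej h.symm
      unfold hdist
      rw [hfil, Finset.card_insert_of_notMem (by simp [hij]), Finset.card_singleton]
    have hjine : zj i ≠ zi i := by rw [← hzj i hij]; exact fun h => hnei h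
    obtain ⟨hwS, _, _⟩ := swS zj hzjS zi hziS hd2 i hit hjine
    set w : Idx r := sw {i} zj zi with hwdef
    have hwv : ∀ l, w l = if l = i then zi l else zj l := fun l => hswv zj zi i l
    -- hdist w zk = 3, hdistT t w zk = 3
    have hfil3 : (univ.filter fun m => w m ≠ zk m) = {i, j, k} := by
      ext m
      simp only [Finset.mem_filter, Finset.mem_univ, true_and, Finset.mem_insert,
        Finset.mem_singleton]
      constructor
      · intro hne
        by_contra hmem
        push_neg at hmem
        obtain ⟨hmi, hmj, hmk⟩ := hmem
        rw [hwv m, if_neg hmi] at hne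
        exact hne ((hzj m hmj).symm.trans (hzk m hmk))
      · intro hm
        rcases hm with hm | hm | hm
        · rw [hm, hwv i, if_pos rfl, ← hzk i hik]
          exact fun h => hnei h.symm
        · rw [hm, hwv j, if_neg (Ne.symm hij), ← hzk j hjk]
          exact fun h => hnej h.symm
        · rw [hm, hwv k, if_neg (Ne.symm hik), ← hzj k (Ne.symm hjk)]
          exact fun h => hnek h
    have h3 : hdist w zk = 3 := by
      unfold hdist
      rw [hfil3, Finset.card_insert_of_notMem (by simp [hij, hik]),
        Finset.card_insert_of_notMem (by simp [hjk]), Finset.card_singleton]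
    have h3t : hdistT t w zk = 3 := by
      unfold hdistT
      have hfil3' : (univ.filter fun m : Fin n => (m : ℕ) < t ∧ w m ≠ zk m) = {i, j, k} := by
        ext m
        constructor
        · intro hm
          have hm' := Finset.mem_filter.mp hm
          have : m ∈ univ.filter fun m => w m ≠ zk m :=
            Finset.mem_filter.mpr ⟨Finset.mem_univ m, hm'.2.2⟩
          rwa [hfil3] at this
        · intro hm
          have : m ∈ univ.filter fun m => w m ≠ zk m := by rw [hfil3]; exact hm
          have hne := (Finset.mem_filter.mp this).2
          refine Finset.mem_filter.mpr ⟨Finset.mem_univ m, ?_, hne⟩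
          simp only [Finset.mem_insert, Finset.mem_singleton] at hm
          rcases hm with hm | hm | hm <;> rw [hm] <;> assumption
      rw [hfil3', Finset.card_insert_of_notMem (by simp [hij, hik]),
        Finset.card_insert_of_notMem (by simp [hjk]), Finset.card_singleton]
    exact hT3 w (hSsub hwS) zk (hSsub hzkS) ⟨h3, h3t⟩
  refine ⟨E, hEcard, ?_⟩
  intro b c hb hc m hmt hmE
  rw [hEdef, Finset.mem_filter] at hmE
  push_neg at hmE
  have hfix : ∀ x ∈ S, x m = a₀ m := fun x hx => hmE (Finset.mem_univ m) hmt x hx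
  rw [hfix b hb, hfix c hc]
end
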